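/- Fix n ≥ 2, k ≥ 2, and let N = 2^{2kn}, c_k = N^{-1}. Let Σ_k = {(x, 2^{-k}) : x ∈ cl(Δ(0, 2^{-k} c_k)) + c_k ℤ^n} ⊂ ℝ^{n+1}, where Δ(0,ρ) is the open n-disk of radius ρ. Fix X₀ ∈ Σ_k and N^{-1/2} ≤ s < 1, let K = cl(B(X₀,s)) ∩ Σ_k, and define the measure μ = 2^{kn} s^{-1} · H^n⌞K. Then for all X ∈ K, the Wolff-type potential W(μ)(X) = ∫₀¹ μ(B(X,t)) t^{-n} dt satisfies W(μ)(X) ≲ 1 with implicit constant depending only on n, and μ(K) ≳ s^{n-1}. -/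

import Mathlib

/-!
`μ` is `2^{kn} s⁻¹ · H^n` on `K`, and `H^n` on `ℝ^n` is a Haar measure, so `μ`-masses are
computed by counting lattice disks, each of `H^n`-mass `≈ (2^{-k} c_k)^n = 2^{-kn} c_k^n`.
A ball `B(X, t)` always has `μ(B(X, t)) ≲ 2^{kn} s⁻¹ t^n`, and for `t ≥ c_k` it meets
`≲ (t / c_k)^n` disks, so `μ(B(X, t)) ≲ s⁻¹ t^n`; the total mass is `≲ s^{n-1}`. Splitting
`∫₀^∞ μ(B(X, t)) t^{-n} dt` at `c_k` and at `s`, the three pieces are `≲ 2^{kn} c_k / s ≤ 1`,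
`≲ 1` and `≲ s^{n-1} ∫_s^∞ t^{-n} dt ≲ 1`, using `2^{kn} c_k = 2^{-kn} ≤ s`. Conversely the
ball `B(X₀, s)` contains `≳ (s / c_k)^n` whole disks, whence `μ(K) ≳ s^{n-1}`.
-/

open Metric MeasureTheory Set Filter
open scoped Topology

noncomputable section

/-- The lattice of closed `n`-disks `Σ_k` at height `2^{-k}`: disks of radius
`2^{-k} c_k` centered at `c_k ℤ^n`, with `c_k = N⁻¹ = 2^{-2kn}`. -/
def latticeSheet (n k : ℕ) : Set (EuclideanSpace ℝ (Fin n) × ℝ) :=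
  {p | p.2 = ((2 : ℝ) ^ k)⁻¹ ∧
    ∃ v : EuclideanSpace ℝ (Fin n),
      (∀ i, ∃ m : ℤ, v i = ((2 : ℝ) ^ (2 * k * n))⁻¹ * (m : ℝ)) ∧
      ‖p.1 - v‖ ≤ ((2 : ℝ) ^ k)⁻¹ * ((2 : ℝ) ^ (2 * k * n))⁻¹}

/-- The normalized measure `μ = 2^{kn} s⁻¹ · H^n ⌞ (cl B(X₀,s) ∩ Σ_k)`. -/
def wolffMeasure (n k : ℕ) (s : ℝ) (X₀ : EuclideanSpace ℝ (Fin n) × ℝ) :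
    Measure (EuclideanSpace ℝ (Fin n) × ℝ) :=
  (ENNReal.ofReal ((2 : ℝ) ^ (k * n) / s)) •
    (μH[(n : ℝ)].restrict (closedBall X₀ s ∩ latticeSheet n k))

open scoped ENNReal

theorem hausdorffMeasure_prod_singleton {X Y : Type*} [EMetricSpace X] [MeasurableSpace X]
    [BorelSpace X] [EMetricSpace Y] [MeasurableSpace Y] [BorelSpace Y]
    [SecondCountableTopologyEither X Y] {d : ℝ} (hd : 0 ≤ d) (A : Set X) (y : Y) :
    μH[d] (A ×ˢ {y}) = μH[d] A := by
  have hiso : Isometry fun x : X => (x, y) := fun x x' => by simp [Prod.edist_eq]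
  rw [prod_singleton, hiso.hausdorffMeasure_image (Or.inl hd)]

theorem ball_inter_prod_singleton_subset {X Y : Type*} [PseudoMetricSpace X]
    [PseudoMetricSpace Y] (p : X × Y) (t : ℝ) (A : Set X) (y : Y) :
    ball p t ∩ A ×ˢ {y} ⊆ (ball p.1 t ∩ A) ×ˢ {y} :=
  fun _ ⟨hq, hA, hy⟩ => ⟨⟨(le_max_left _ _).trans_lt (mem_ball.1 hq), hA⟩, hy⟩

theorem closedBall_inter_prod_singleton_subset {X Y : Type*} [PseudoMetricSpace X]
    [PseudoMetricSpace Y] (p : X × Y) (t : ℝ) (A : Set X) (y : Y) :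
    closedBall p t ∩ A ×ˢ {y} ⊆ (closedBall p.1 t ∩ A) ×ˢ {y} :=
  fun _ ⟨hq, hA, hy⟩ => ⟨⟨(le_max_left _ _).trans (mem_closedBall.1 hq), hA⟩, hy⟩

theorem closedBall_fst_prod_singleton_subset {X Y : Type*} [PseudoMetricSpace X]
    [PseudoMetricSpace Y] {p : X × Y} {t : ℝ} (ht : 0 ≤ t) :
    closedBall p.1 t ×ˢ {p.2} ⊆ closedBall p t := by
  rw [← closedBall_prod_same]
  exact prod_mono le_rfl (singleton_subset_iff.2 (mem_closedBall_self ht))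

theorem EuclideanSpace.norm_le_sqrt_card_mul {ι : Type*} [Fintype ι] (y : EuclideanSpace ℝ ι)
    {c : ℝ} (hc : 0 ≤ c) (h : ∀ i, |y i| ≤ c) : ‖y‖ ≤ √(Fintype.card ι) * c := by
  rw [EuclideanSpace.norm_eq, ← Real.sqrt_sq hc, ← Real.sqrt_mul (Nat.cast_nonneg _)]
  refine Real.sqrt_le_sqrt ?_
  calc ∑ i, ‖y i‖ ^ 2 ≤ ∑ _i : ι, c ^ 2 :=
        Finset.sum_le_sum fun i _ => pow_le_pow_left₀ (norm_nonneg _) (h i) 2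
    _ = Fintype.card ι * c ^ 2 := by simp

theorem Int.card_Icc_ceil_floor_le {a b : ℝ} (hab : a ≤ b) :
    ((Finset.Icc ⌈a⌉ ⌊b⌋).card : ℝ) ≤ b - a + 1 := by
  rw [Int.card_Icc, ← Int.cast_natCast, Int.toNat_eq_max]
  push_cast
  refine max_le ?_ (by linarith)
  linarith [Int.floor_le b, Int.le_ceil a]

theorem lintegral_Ioi_inv_pow {n : ℕ} (hn : 2 ≤ n) {s : ℝ} (hs : 0 < s) :
    ∫⁻ t in Ioi s, (ENNReal.ofReal (t ^ n))⁻¹ = ENNReal.ofReal (s ^ (1 - (n : ℝ)) / (n - 1)) := by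
  have hn' : (1 : ℝ) < n := by exact_mod_cast hn
  have hpow : ∀ t ∈ Ioi s, (ENNReal.ofReal (t ^ n))⁻¹ = ENNReal.ofReal (t ^ (-(n : ℝ))) := by
    intro t ht
    have ht0 : 0 < t := hs.trans ht
    rw [Real.rpow_neg ht0.le, Real.rpow_natCast, ENNReal.ofReal_inv_of_pos (by positivity)]
  rw [setLIntegral_congr_fun measurableSet_Ioi hpow, ← ofReal_integral_eq_lintegral_ofReal
    (integrableOn_Ioi_rpow_of_lt (by linarith) hs)
    ((ae_restrict_iff' measurableSet_Ioi).2 (Eventually.of_forall fun t ht =>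
      Real.rpow_nonneg (hs.trans ht).le _)),
    integral_Ioi_rpow_of_lt (by linarith) hs]
  congr 1
  rw [neg_div, ← div_neg]
  ring_nf

def latticePoint {n : ℕ} (ε : ℝ) (m : Fin n → ℤ) : EuclideanSpace ℝ (Fin n) :=
  WithLp.toLp 2 fun i => ε * m i

def latticeBalls (n : ℕ) (ε ρ : ℝ) : Set (EuclideanSpace ℝ (Fin n)) :=
  ⋃ m : Fin n → ℤ, closedBall (latticePoint ε m) ρ

section Lattice

variable {n : ℕ} {ε ρ : ℝ}

theorem mem_piFinset_of_dist_latticePoint_le (hε : 0 < ε) {m : Fin n → ℤ}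
    {x : EuclideanSpace ℝ (Fin n)} {R : ℝ} (h : dist (latticePoint ε m) x ≤ R) :
    m ∈ Fintype.piFinset fun i => Finset.Icc ⌈(x i - R) / ε⌉ ⌊(x i + R) / ε⌋ := by
  refine Fintype.mem_piFinset.2 fun i => ?_
  have hi : |ε * m i - x i| ≤ R := by
    rw [dist_eq_norm] at h
    exact (PiLp.norm_apply_le (latticePoint ε m - x) i).trans h
  rw [abs_le] at hi
  rw [Finset.mem_Icc, Int.ceil_le, Int.le_floor, div_le_iff₀ hε, le_div_iff₀ hε]
  constructor <;> linarith

theorem card_piFinset_Icc_ceil_floor_le (hε : 0 < ε) (x : EuclideanSpace ℝ (Fin n)) {R : ℝ}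
    (hR : 0 ≤ R) :
    ((Fintype.piFinset fun i => Finset.Icc ⌈(x i - R) / ε⌉ ⌊(x i + R) / ε⌋).card : ℝ)
      ≤ (2 * R / ε + 1) ^ n := by
  rw [Fintype.card_piFinset, Nat.cast_prod]
  refine (Finset.prod_le_prod (fun _ _ => by positivity) fun i _ =>
    Int.card_Icc_ceil_floor_le (by gcongr; linarith)).trans_eq ?_
  have hlen : ∀ i, (x i + R) / ε - (x i - R) / ε + 1 = 2 * R / ε + 1 := fun i => by ring
  simp only [hlen, Finset.prod_const, Finset.card_univ, Fintype.card_fin]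

theorem measure_latticeBalls_inter_closedBall_le (μ : Measure (EuclideanSpace ℝ (Fin n)))
    [μ.IsAddHaarMeasure] (hε : 0 < ε) (hρ : 0 ≤ ρ) (x : EuclideanSpace ℝ (Fin n)) {r : ℝ}
    (hr : 0 ≤ r) :
    μ (latticeBalls n ε ρ ∩ closedBall x r)
      ≤ ENNReal.ofReal ((2 * (r + ρ) / ε + 1) ^ n * ρ ^ n) * μ (ball 0 1) := by
  set F := Fintype.piFinset fun i => Finset.Icc ⌈(x i - (r + ρ)) / ε⌉ ⌊(x i + (r + ρ)) / ε⌋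
  have hsub : latticeBalls n ε ρ ∩ closedBall x r ⊆ ⋃ m ∈ F, closedBall (latticePoint ε m) ρ := by
    rintro y ⟨hy, hyx⟩
    obtain ⟨m, hm⟩ := mem_iUnion.1 hy
    refine mem_biUnion (mem_piFinset_of_dist_latticePoint_le hε ?_) hm
    exact (dist_triangle_left _ _ y).trans (add_le_add (mem_closedBall.1 hm) hyx) |>.trans_eq
      (add_comm _ _)
  calc μ (latticeBalls n ε ρ ∩ closedBall x r)
      ≤ ∑ m ∈ F, μ (closedBall (latticePoint ε m) ρ) :=
        (measure_mono hsub).trans (measure_biUnion_finset_le F _)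
    _ = F.card * (ENNReal.ofReal (ρ ^ n) * μ (ball 0 1)) := by
        simp [μ.addHaar_closedBall _ hρ]
    _ ≤ ENNReal.ofReal ((2 * (r + ρ) / ε + 1) ^ n * ρ ^ n) * μ (ball 0 1) := by
        rw [← mul_assoc, ← ENNReal.ofReal_natCast, ← ENNReal.ofReal_mul (Nat.cast_nonneg _)]
        gcongr
        exact card_piFinset_Icc_ceil_floor_le hε x (by positivity)

theorem dist_latticePoint_le_of_mem_piFinset (hε : 0 < ε) (x : EuclideanSpace ℝ (Fin n))
    (L : ℕ) {m : Fin n → ℤ}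
    (hm : m ∈ Fintype.piFinset fun i => Finset.Ico ⌈x i / ε⌉ (⌈x i / ε⌉ + L)) :
    dist (latticePoint ε m) x ≤ √n * (L * ε) := by
  rw [dist_eq_norm]
  have hcoord : ∀ i, |(latticePoint ε m - x) i| ≤ L * ε := by
    intro i
    obtain ⟨hlo, hhi⟩ := Finset.mem_Ico.1 (Fintype.mem_piFinset.1 hm i)
    have hhi' : (m i : ℝ) + 1 ≤ ⌈x i / ε⌉ + L := by exact_mod_cast Int.add_one_le_iff.2 hhi
    have h1 : x i ≤ m i * ε := (div_le_iff₀ hε).1 ((Int.le_ceil _).trans (Int.cast_le.2 hlo))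
    have h2 : (m i - L) * ε ≤ x i :=
      (le_div_iff₀ hε).1 (by linarith [Int.ceil_lt_add_one (x i / ε)])
    show |ε * m i - x i| ≤ L * ε
    rw [abs_le]
    constructor <;> linarith
  simpa using EuclideanSpace.norm_le_sqrt_card_mul _ (by positivity) hcoord

theorem le_dist_latticePoint (hε : 0 < ε) {m m' : Fin n → ℤ} (h : m ≠ m') :
    ε ≤ dist (latticePoint ε m) (latticePoint ε m') := by
  obtain ⟨i, hi⟩ := Function.ne_iff.1 h
  have h1 : (1 : ℝ) ≤ |(m i : ℝ) - m' i| := by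
    exact_mod_cast Int.one_le_abs (sub_ne_zero.2 hi)
  calc ε ≤ |ε * m i - ε * m' i| := by
        rw [← mul_sub, abs_mul, abs_of_pos hε]; exact le_mul_of_one_le_right hε.le h1
    _ ≤ dist (latticePoint ε m) (latticePoint ε m') := by
        rw [dist_eq_norm]; exact PiLp.norm_apply_le (latticePoint ε m - latticePoint ε m') i

theorem le_measure_latticeBalls_inter_closedBall (μ : Measure (EuclideanSpace ℝ (Fin n)))
    [μ.IsAddHaarMeasure] (hε : 0 < ε) (hρ : 0 ≤ ρ) (h2ρ : 2 * ρ < ε)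
    (x : EuclideanSpace ℝ (Fin n)) {L : ℕ} {r : ℝ} (hfit : √n * (L * ε) + ρ ≤ r) :
    ENNReal.ofReal (L ^ n * ρ ^ n) * μ (ball 0 1) ≤ μ (latticeBalls n ε ρ ∩ closedBall x r) := by
  set F := Fintype.piFinset fun i => Finset.Ico ⌈x i / ε⌉ (⌈x i / ε⌉ + L)
  have hcard : F.card = L ^ n := by simp [F, Fintype.card_piFinset]
  have hsub : (⋃ m ∈ F, closedBall (latticePoint ε m) ρ) ⊆ latticeBalls n ε ρ ∩ closedBall x r :=
    iUnion₂_subset fun m hm y hy => ⟨mem_iUnion.2 ⟨m, hy⟩, (dist_triangle _ _ x).trans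
      ((add_le_add (mem_closedBall.1 hy) (dist_latticePoint_le_of_mem_piFinset hε x L hm)).trans
        (by linarith))⟩
  have hdisj : (F : Set (Fin n → ℤ)).PairwiseDisjoint fun m => closedBall (latticePoint ε m) ρ :=
    fun m _ m' _ h => closedBall_disjoint_closedBall (by linarith [le_dist_latticePoint hε h])
  calc ENNReal.ofReal (L ^ n * ρ ^ n) * μ (ball 0 1)
      = F.card * (ENNReal.ofReal (ρ ^ n) * μ (ball 0 1)) := by
        rw [hcard, ← mul_assoc, ENNReal.ofReal_mul (by positivity)]
        norm_cast
    _ = ∑ m ∈ F, μ (closedBall (latticePoint ε m) ρ) := by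
        simp [μ.addHaar_closedBall _ hρ]
    _ = μ (⋃ m ∈ F, closedBall (latticePoint ε m) ρ) :=
        (measure_biUnion_finset hdisj fun _ _ => measurableSet_closedBall).symm
    _ ≤ μ (latticeBalls n ε ρ ∩ closedBall x r) := measure_mono hsub

end Lattice

theorem setLIntegral_Ioc_le_of_le {f : ℝ → ℝ≥0∞} {a b : ℝ} {c : ℝ≥0∞}
    (hf : ∀ t ∈ Ioc a b, f t ≤ c) : ∫⁻ t in Ioc a b, f t ≤ c * ENNReal.ofReal (b - a) := by
  simpa using setLIntegral_mono' (μ := volume) measurableSet_Ioc hf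

theorem lintegral_measure_ball_div_pow_le {α : Type*} [PseudoMetricSpace α] [MeasurableSpace α]
    (μ : Measure α) (x : α) {n : ℕ} (hn : 2 ≤ n) {a b : ℝ≥0∞} {ε s : ℝ} (hε : 0 ≤ ε) (hs : 0 < s)
    (h_small : ∀ t, 0 < t → μ (ball x t) ≤ a * ENNReal.ofReal (t ^ n))
    (h_large : ∀ t, ε < t → μ (ball x t) ≤ b * ENNReal.ofReal (t ^ n))
    (h_total : μ univ ≤ b * ENNReal.ofReal (s ^ n)) :
    ∫⁻ t in Ioi 0, μ (ball x t) / ENNReal.ofReal (t ^ n)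
      ≤ a * ENNReal.ofReal ε + 2 * b * ENNReal.ofReal s := by
  set f := fun t => μ (ball x t) / ENNReal.ofReal (t ^ n)
  have hcover : Ioi (0 : ℝ) ⊆ Ioc 0 ε ∪ Ioc ε s ∪ Ioi s := by
    intro t (ht : 0 < t)
    by_cases h1 : t ≤ ε
    · exact Or.inl (Or.inl ⟨ht, h1⟩)
    by_cases h2 : t ≤ s
    · exact Or.inl (Or.inr ⟨not_le.1 h1, h2⟩)
    · exact Or.inr (not_le.1 h2)
  have h_div : ∀ {t : ℝ} {c : ℝ≥0∞}, μ (ball x t) ≤ c * ENNReal.ofReal (t ^ n) → f t ≤ c :=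
    ENNReal.div_le_of_le_mul
  have hI₁ : ∫⁻ t in Ioc 0 ε, f t ≤ a * ENNReal.ofReal ε := by
    simpa using setLIntegral_Ioc_le_of_le fun t ht => h_div (h_small t ht.1)
  have hI₂ : ∫⁻ t in Ioc ε s, f t ≤ b * ENNReal.ofReal s :=
    (setLIntegral_Ioc_le_of_le fun t ht => h_div (h_large t ht.1)).trans
      (by gcongr; linarith)
  have hI₃ : ∫⁻ t in Ioi s, f t ≤ b * ENNReal.ofReal s := by
    calc ∫⁻ t in Ioi s, f t
        ≤ ∫⁻ t in Ioi s, b * ENNReal.ofReal (s ^ n) * (ENNReal.ofReal (t ^ n))⁻¹ :=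
          lintegral_mono fun t =>
            ENNReal.div_le_div_right ((measure_mono (subset_univ _)).trans h_total) _
      _ = b * ENNReal.ofReal (s ^ n) * ENNReal.ofReal (s ^ (1 - (n : ℝ)) / (n - 1)) := by
          rw [lintegral_const_mul _ (by fun_prop), lintegral_Ioi_inv_pow hn hs]
      _ ≤ b * ENNReal.ofReal s := by
          rw [mul_assoc, ← ENNReal.ofReal_mul (by positivity)]
          gcongr
          have hpow : s ^ n * s ^ (1 - (n : ℝ)) = s := by
            rw [← Real.rpow_natCast, ← Real.rpow_add hs]; simp
          rw [← mul_div_assoc, hpow]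
          have hn' : (2 : ℝ) ≤ n := by exact_mod_cast hn
          exact div_le_self hs.le (by linarith)
  calc ∫⁻ t in Ioi 0, f t ≤ ∫⁻ t in Ioc 0 ε ∪ Ioc ε s ∪ Ioi s, f t := lintegral_mono_set hcover
    _ ≤ (∫⁻ t in Ioc 0 ε, f t) + (∫⁻ t in Ioc ε s, f t) + ∫⁻ t in Ioi s, f t :=
        (lintegral_union_le _ _ _).trans (add_le_add (lintegral_union_le _ _ _) le_rfl)
    _ ≤ a * ENNReal.ofReal ε + b * ENNReal.ofReal s + b * ENNReal.ofReal s :=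
        add_le_add (add_le_add hI₁ hI₂) hI₃
    _ = a * ENNReal.ofReal ε + 2 * b * ENNReal.ofReal s := by ring

theorem latticeSheet_eq (n k : ℕ) :
    latticeSheet n k = latticeBalls n ((2 : ℝ) ^ (2 * k * n))⁻¹
      (((2 : ℝ) ^ k)⁻¹ * ((2 : ℝ) ^ (2 * k * n))⁻¹) ×ˢ {((2 : ℝ) ^ k)⁻¹} := by
  ext ⟨x, y⟩
  simp only [latticeSheet, latticeBalls, mem_prod, mem_singleton_iff, mem_iUnion,
    mem_closedBall, dist_eq_norm, mem_ofPred_eq]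
  constructor
  · rintro ⟨hy, v, hv, hxv⟩
    choose m hm using hv
    refine ⟨⟨m, ?_⟩, hy⟩
    rwa [show latticePoint _ m = v from PiLp.ext fun i => (hm i).symm]
  · rintro ⟨⟨m, hm⟩, hy⟩
    exact ⟨hy, latticePoint _ m, fun i => ⟨m i, rfl⟩, hm⟩

theorem two_pow_two_mul_mul (k n : ℕ) : (2 : ℝ) ^ (2 * k * n) = ((2 : ℝ) ^ (k * n)) ^ 2 := by
  ring

theorem two_pow_mul_mul_inv_two_pow_two_mul (k n : ℕ) :
    (2 : ℝ) ^ (k * n) * ((2 : ℝ) ^ (2 * k * n))⁻¹ = ((2 : ℝ) ^ (k * n))⁻¹ := by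
  rw [two_pow_two_mul_mul, sq, mul_inv, ← mul_assoc, mul_inv_cancel₀ (by positivity), one_mul]

theorem inv_two_pow_pow_mul_two_pow (k n : ℕ) : ((2 : ℝ) ^ k)⁻¹ ^ n * 2 ^ (k * n) = 1 := by
  rw [inv_pow, ← pow_mul, inv_mul_cancel₀ (by positivity)]

theorem inv_two_pow_le_half {k : ℕ} (hk : 1 ≤ k) : ((2 : ℝ) ^ k)⁻¹ ≤ 1 / 2 := by
  rw [one_div]
  exact inv_anti₀ two_pos (le_self_pow₀ one_le_two (by omega))

theorem two_mul_add_one_le_two_pow {n k : ℕ} (hn : 1 ≤ n) (hk : 2 ≤ k) :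
    2 * ((n : ℝ) + 1) ≤ 2 ^ (k * n) := by
  have h1 : 2 * (n + 1) ≤ 2 ^ (n + 1) := by
    rw [pow_succ, mul_comm]; exact Nat.mul_le_mul_right 2 Nat.lt_two_pow_self
  have h2 : 2 ^ (n + 1) ≤ 2 ^ (k * n) := Nat.pow_le_pow_right two_pos (by nlinarith)
  exact_mod_cast h1.trans h2

/-- A grid of `L^n` disks of radius `h ε` and spacing `ε` fits into a ball of radius `s`, and
its `H^n`-mass weighted by `P / s` is `≳ s^{n-1}`. -/
theorem exists_lattice_grid_size {n : ℕ} (hn : 1 ≤ n) {P ε h s : ℝ} (hε : 0 < ε) (hh0 : 0 < h)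
    (hh : h ≤ 1) (hscale : h ^ n * P = 1) (hPε : P * ε ≤ s) (hP : 2 * ((n : ℝ) + 1) ≤ P) :
    ∃ L : ℕ, √n * (L * ε) + h * ε ≤ s ∧
      s ^ (n - 1) / (2 * n) ^ n ≤ P / s * (L ^ n * (h * ε) ^ n) := by
  have hn0 : (1 : ℝ) ≤ n := by exact_mod_cast hn
  have hP0 : 0 < P := by linarith
  have hs0 : 0 < s := by nlinarith
  set L : ℕ := ⌈s / (2 * n * ε)⌉₊
  have hL : s / (2 * n * ε) ≤ L := Nat.le_ceil _
  have hL' : (L : ℝ) < s / (2 * n * ε) + 1 := Nat.ceil_lt_add_one (by positivity)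
  refine ⟨L, ?_, ?_⟩
  · have hsqrt : √(n : ℝ) ≤ n := Real.sqrt_le_self_iff.2 (Or.inr hn0)
    have h1 : n * (L * ε) ≤ s / 2 + n * ε := by
      have := mul_le_mul_of_nonneg_left hL'.le (by positivity : (0 : ℝ) ≤ n * ε)
      field_simp at this ⊢
      linarith
    have h2 : (n + 1) * ε ≤ s / 2 := by nlinarith
    nlinarith [mul_le_mul_of_nonneg_right hsqrt (by positivity : (0 : ℝ) ≤ L * ε)]
  · have hLhε : s * h / (2 * n) ≤ L * (h * ε) := by
      calc s * h / (2 * n) = s / (2 * n * ε) * (h * ε) := by field_simp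
        _ ≤ L * (h * ε) := by gcongr
    calc s ^ (n - 1) / (2 * n) ^ n = h ^ n * P * (s ^ (n - 1) * s / s) / (2 * n) ^ n := by
          rw [hscale, mul_div_cancel_right₀ _ hs0.ne', one_mul]
      _ = P / s * (s * h / (2 * n)) ^ n := by
          rw [div_pow, mul_pow s h, ← pow_sub_one_mul (show n ≠ 0 by omega) s]
          ring
      _ ≤ P / s * (L ^ n * (h * ε) ^ n) := by
          rw [← mul_pow]; gcongr

section WolffMeasure

variable {n k : ℕ} {s : ℝ} {X₀ : EuclideanSpace ℝ (Fin n) × ℝ}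

theorem wolffMeasure_le (A : Set (EuclideanSpace ℝ (Fin n) × ℝ)) (hA : MeasurableSet A) :
    wolffMeasure n k s X₀ A ≤ ENNReal.ofReal (2 ^ (k * n) / s) * μH[n] (A ∩ latticeSheet n k) := by
  rw [wolffMeasure, Measure.smul_apply, Measure.restrict_apply hA, smul_eq_mul]
  gcongr
  exact inter_subset_right

theorem wolffMeasure_univ :
    wolffMeasure n k s X₀ univ = wolffMeasure n k s X₀ (closedBall X₀ s) := by
  simp [wolffMeasure, Measure.restrict_apply measurableSet_closedBall, ← inter_assoc]

theorem wolffMeasure_ball_le (X : EuclideanSpace ℝ (Fin n) × ℝ) {t : ℝ} (ht : 0 < t) :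
    wolffMeasure n k s X₀ (ball X t)
      ≤ ENNReal.ofReal (2 ^ (k * n) / s) * μH[n] (ball (0 : EuclideanSpace ℝ (Fin n)) 1)
        * ENNReal.ofReal (t ^ n) := by
  refine (wolffMeasure_le _ measurableSet_ball).trans ?_
  rw [mul_assoc]
  gcongr
  rw [latticeSheet_eq]
  calc μH[n] (ball X t ∩ _ ×ˢ _) ≤ μH[n] ((ball X.1 t ∩ _) ×ˢ _) :=
        measure_mono (ball_inter_prod_singleton_subset _ _ _ _)
    _ ≤ μH[n] (ball X.1 t) := by
        rw [hausdorffMeasure_prod_singleton (Nat.cast_nonneg n)]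
        exact measure_mono inter_subset_left
    _ = _ := by rw [Measure.addHaar_ball_of_pos _ _ ht, finrank_euclideanSpace_fin, mul_comm]

theorem wolffMeasure_closedBall_le (hk : 1 ≤ k) (hs : 0 < s) (X : EuclideanSpace ℝ (Fin n) × ℝ)
    {t : ℝ} (ht : ((2 : ℝ) ^ (2 * k * n))⁻¹ ≤ t) :
    wolffMeasure n k s X₀ (closedBall X t)
      ≤ ENNReal.ofReal (4 ^ n / s) * μH[n] (ball (0 : EuclideanSpace ℝ (Fin n)) 1)
        * ENNReal.ofReal (t ^ n) := by
  set ε : ℝ := ((2 : ℝ) ^ (2 * k * n))⁻¹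
  set h : ℝ := ((2 : ℝ) ^ k)⁻¹
  have hε : 0 < ε := by positivity
  have ht0 : 0 ≤ t := hε.le.trans ht
  have hh : h ≤ 1 / 2 := inv_two_pow_le_half hk
  have hcount : μH[n] (closedBall X t ∩ latticeSheet n k)
      ≤ ENNReal.ofReal ((2 * (t + h * ε) / ε + 1) ^ n * (h * ε) ^ n)
        * μH[n] (ball (0 : EuclideanSpace ℝ (Fin n)) 1) := by
    rw [latticeSheet_eq]
    calc μH[n] (closedBall X t ∩ _ ×ˢ _) ≤ μH[n] ((closedBall X.1 t ∩ _) ×ˢ _) :=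
          measure_mono (closedBall_inter_prod_singleton_subset _ _ _ _)
      _ = μH[n] (latticeBalls n ε (h * ε) ∩ closedBall X.1 t) := by
          rw [hausdorffMeasure_prod_singleton (Nat.cast_nonneg n), inter_comm]
      _ ≤ _ := measure_latticeBalls_inter_closedBall_le _ hε (by positivity) _ ht0
  have harith : 2 ^ (k * n) / s * ((2 * (t + h * ε) / ε + 1) ^ n * (h * ε) ^ n)
      ≤ 4 ^ n / s * t ^ n := by
    calc 2 ^ (k * n) / s * ((2 * (t + h * ε) / ε + 1) ^ n * (h * ε) ^ n)
        = (2 * t + 2 * h * ε + ε) ^ n * (h ^ n * 2 ^ (k * n)) / s := by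
          have hprod : (2 * (t + h * ε) / ε + 1) * (h * ε) = (2 * t + 2 * h * ε + ε) * h := by
            field_simp
          rw [← mul_pow, hprod, mul_pow]
          ring
      _ ≤ (4 * t) ^ n / s := by
          rw [inv_two_pow_pow_mul_two_pow, mul_one]
          gcongr
          nlinarith
      _ = 4 ^ n / s * t ^ n := by ring
  calc wolffMeasure n k s X₀ (closedBall X t)
      ≤ ENNReal.ofReal (2 ^ (k * n) / s) * μH[n] (closedBall X t ∩ latticeSheet n k) :=
        wolffMeasure_le _ measurableSet_closedBall
    _ ≤ ENNReal.ofReal (2 ^ (k * n) / s * ((2 * (t + h * ε) / ε + 1) ^ n * (h * ε) ^ n))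
          * μH[n] (ball (0 : EuclideanSpace ℝ (Fin n)) 1) := by
        rw [ENNReal.ofReal_mul (by positivity), mul_assoc]
        gcongr
    _ ≤ ENNReal.ofReal (4 ^ n / s * t ^ n) * μH[n] (ball (0 : EuclideanSpace ℝ (Fin n)) 1) := by
        gcongr
    _ = _ := by rw [ENNReal.ofReal_mul (by positivity)]; ring

theorem lintegral_wolffMeasure_ball_div_pow_le (hn : 2 ≤ n) (hk : 1 ≤ k)
    (hs : ((2 : ℝ) ^ (k * n))⁻¹ ≤ s) (X : EuclideanSpace ℝ (Fin n) × ℝ) :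
    ∫⁻ t in Ioi 0, wolffMeasure n k s X₀ (ball X t) / ENNReal.ofReal (t ^ n)
      ≤ (1 + 2 * 4 ^ n) * μH[n] (ball (0 : EuclideanSpace ℝ (Fin n)) 1) := by
  set c := μH[n] (ball (0 : EuclideanSpace ℝ (Fin n)) 1)
  set P : ℝ := 2 ^ (k * n)
  have hP : 1 ≤ P := one_le_pow₀ one_le_two
  have hs0 : 0 < s := (inv_pos.2 (by positivity)).trans_le hs
  have hPε : P * ((2 : ℝ) ^ (2 * k * n))⁻¹ ≤ s :=
    (two_pow_mul_mul_inv_two_pow_two_mul k n).trans_le hs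
  have hεs : ((2 : ℝ) ^ (2 * k * n))⁻¹ ≤ s :=
    (le_mul_of_one_le_left (by positivity) hP).trans hPε
  refine (lintegral_measure_ball_div_pow_le _ X hn (by positivity) hs0
    (fun t ht => wolffMeasure_ball_le X ht)
    (fun t ht => (measure_mono ball_subset_closedBall).trans
      (wolffMeasure_closedBall_le hk hs0 X ht.le))
    (wolffMeasure_univ.trans_le (wolffMeasure_closedBall_le hk hs0 X₀ hεs))).trans ?_
  have hsmall : ENNReal.ofReal (P / s) * ENNReal.ofReal ((2 : ℝ) ^ (2 * k * n))⁻¹ ≤ 1 := by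
    rw [← ENNReal.ofReal_mul (by positivity), ENNReal.ofReal_le_one, div_mul_eq_mul_div,
      div_le_one hs0]
    exact hPε
  have hlarge : ENNReal.ofReal (4 ^ n / s) * ENNReal.ofReal s = 4 ^ n := by
    rw [← ENNReal.ofReal_mul (by positivity), div_mul_cancel₀ _ hs0.ne',
      ENNReal.ofReal_pow zero_le_four]
    simp
  calc ENNReal.ofReal (P / s) * c * ENNReal.ofReal ((2 : ℝ) ^ (2 * k * n))⁻¹
        + 2 * (ENNReal.ofReal (4 ^ n / s) * c) * ENNReal.ofReal s
      = ENNReal.ofReal (P / s) * ENNReal.ofReal ((2 : ℝ) ^ (2 * k * n))⁻¹ * c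
        + 2 * (ENNReal.ofReal (4 ^ n / s) * ENNReal.ofReal s) * c := by ring
    _ ≤ (1 + 2 * 4 ^ n) * c := by rw [hlarge, add_mul]; gcongr

theorem le_wolffMeasure_closedBall_inter_latticeSheet (hn : 1 ≤ n) (hk : 2 ≤ k)
    (hX₀ : X₀ ∈ latticeSheet n k) (hs : ((2 : ℝ) ^ (k * n))⁻¹ ≤ s) :
    ENNReal.ofReal (s ^ (n - 1) / (2 * n) ^ n) * μH[n] (ball (0 : EuclideanSpace ℝ (Fin n)) 1)
      ≤ wolffMeasure n k s X₀ (closedBall X₀ s ∩ latticeSheet n k) := by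
  set P : ℝ := 2 ^ (k * n)
  set ε : ℝ := ((2 : ℝ) ^ (2 * k * n))⁻¹
  set h : ℝ := ((2 : ℝ) ^ k)⁻¹
  have hε : 0 < ε := by positivity
  have hh : h < 1 / 2 := by
    rw [one_div]; exact inv_strictAnti₀ two_pos (lt_self_pow₀ one_lt_two (by omega))
  have hs0 : 0 < s := (inv_pos.2 (by positivity)).trans_le hs
  obtain ⟨L, hfit, hmass⟩ := exists_lattice_grid_size hn hε (by positivity) (by linarith)
    (inv_two_pow_pow_mul_two_pow k n) ((two_pow_mul_mul_inv_two_pow_two_mul k n).trans_le hs)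
    (two_mul_add_one_le_two_pow hn hk)
  have hsub : (closedBall X₀.1 s ∩ latticeBalls n ε (h * ε)) ×ˢ {h}
      ⊆ closedBall X₀ s ∩ latticeSheet n k := by
    rw [latticeSheet_eq]
    rintro p ⟨⟨hC, hB⟩, hp⟩
    exact ⟨closedBall_fst_prod_singleton_subset hs0.le ⟨hC, hp.trans hX₀.1.symm⟩, hB, hp⟩
  calc ENNReal.ofReal (s ^ (n - 1) / (2 * n) ^ n) * μH[n] (ball (0 : EuclideanSpace ℝ (Fin n)) 1)
      ≤ ENNReal.ofReal (P / s) * (ENNReal.ofReal (L ^ n * (h * ε) ^ n)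
          * μH[n] (ball (0 : EuclideanSpace ℝ (Fin n)) 1)) := by
        rw [← mul_assoc, ← ENNReal.ofReal_mul (by positivity)]
        gcongr
    _ ≤ ENNReal.ofReal (P / s) * μH[n] (latticeBalls n ε (h * ε) ∩ closedBall X₀.1 s) := by
        gcongr
        exact le_measure_latticeBalls_inter_closedBall _ hε (by positivity) (by nlinarith) _ hfit
    _ = ENNReal.ofReal (P / s)
          * μH[n] ((closedBall X₀.1 s ∩ latticeBalls n ε (h * ε)) ×ˢ {h}) := by
        rw [hausdorffMeasure_prod_singleton (Nat.cast_nonneg n), inter_comm]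
    _ ≤ ENNReal.ofReal (P / s) * μH[n] (closedBall X₀ s ∩ latticeSheet n k) := by
        gcongr
    _ = wolffMeasure n k s X₀ (closedBall X₀ s ∩ latticeSheet n k) := by
        simp [wolffMeasure, P]

end WolffMeasure

/-- The Wolff-type potential of `μ` is bounded on `K`, with constant depending only on
`n`, and `μ(K) ≳ s^{n-1}`. -/
theorem stmt15 {n : ℕ} (hn : 2 ≤ n) :
    ∃ C : ℝ, 0 < C ∧
      ∀ k : ℕ, 2 ≤ k →
        ∀ X₀ ∈ latticeSheet n k, ∀ s : ℝ,
          (Real.sqrt ((2 : ℝ) ^ (2 * k * n)))⁻¹ ≤ s → s < 1 →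
          (∀ X ∈ closedBall X₀ s ∩ latticeSheet n k,
            ∫⁻ t in Set.Ioo (0 : ℝ) 1,
                (wolffMeasure n k s X₀) (ball X t) / ENNReal.ofReal (t ^ n)
              ≤ ENNReal.ofReal C) ∧
          ENNReal.ofReal (s ^ (n - 1) / C) ≤
            (wolffMeasure n k s X₀) (closedBall X₀ s ∩ latticeSheet n k) := by
  set c := μH[n] (ball (0 : EuclideanSpace ℝ (Fin n)) 1)
  have hc : c ≠ ⊤ := measure_ball_lt_top.ne
  have hc0 : 0 < c.toReal := ENNReal.toReal_pos (measure_ball_pos _ _ one_pos).ne' hc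
  refine ⟨(1 + 2 * 4 ^ n) * c.toReal + (2 * n) ^ n / c.toReal, by positivity,
    fun k hk X₀ hX₀ s hs _ => ?_⟩
  rw [two_pow_two_mul_mul, Real.sqrt_sq (by positivity)] at hs
  have hs0 : 0 ≤ s := (inv_pos.2 (by positivity)).le.trans hs
  refine ⟨fun X _ => ?_, ?_⟩
  · calc ∫⁻ t in Ioo 0 1, wolffMeasure n k s X₀ (ball X t) / ENNReal.ofReal (t ^ n)
        ≤ ∫⁻ t in Ioi 0, wolffMeasure n k s X₀ (ball X t) / ENNReal.ofReal (t ^ n) :=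
          lintegral_mono_set Ioo_subset_Ioi_self
      _ ≤ (1 + 2 * 4 ^ n) * c := lintegral_wolffMeasure_ball_div_pow_le hn (by omega) hs X
      _ = ENNReal.ofReal ((1 + 2 * 4 ^ n) * c.toReal) := by
          rw [ENNReal.ofReal_mul (by positivity), ENNReal.ofReal_toReal hc]
          norm_num [ENNReal.ofReal_add, ENNReal.ofReal_pow]
      _ ≤ _ := by gcongr; exact le_add_of_nonneg_right (by positivity)
  · calc ENNReal.ofReal (s ^ (n - 1) / ((1 + 2 * 4 ^ n) * c.toReal + (2 * n) ^ n / c.toReal))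
        ≤ ENNReal.ofReal (s ^ (n - 1) / ((2 * n) ^ n / c.toReal)) := by
          gcongr
          exact le_add_of_nonneg_left (by positivity)
      _ = ENNReal.ofReal (s ^ (n - 1) / (2 * n) ^ n) * c := by
          rw [div_div_eq_mul_div, mul_div_right_comm, ENNReal.ofReal_mul (by positivity),
            ENNReal.ofReal_toReal hc]
      _ ≤ _ := le_wolffMeasure_closedBall_inter_latticeSheet (by omega) hk hX₀ hs
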